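/- Let ψ be a critical branching mechanism, λ > 0, η = ψ^{-1}(λ), and θ_λ = inf{θ : ψ_θ(η) ≥ 0} (so ψ(θ_λ + η) = ψ(θ_λ), i.e. θ̄_λ - θ_λ = η, assuming θ_λ belongs to the domain). Then the function f_λ(r) = (1/η)(1 - ψ'(r)/ψ'(r̄)) for r ∈ (θ_λ, 0), where r̄ = ψ^{-1}(ψ(r)) ≥ 0 satisfies ψ(r̄) = ψ(r), is a probability density: f_λ ≥ 0 on (θ_λ, 0) and ∫_{θ_λ}^0 f_λ(r) dr = 1. -/

import Mathlib

/-!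
Strict convexity with `ψ'(0) = 0` makes `ψ` strictly decreasing on `(-∞, 0]` and strictly
increasing on `[0, ∞)`, so `r̄` is the inverse of `ψ|[0, ∞)` applied to `ψ r`: it is
continuous, and differentiating `ψ (r̄) = ψ r` gives `dr̄/dr = ψ'(r) / ψ'(r̄)` for `r < 0`.
Hence `F r = 1 - (r̄ - r) / η` is an antiderivative of `f_λ`, and
`∫_{θ_λ}^0 f_λ = F 0 - F θ_λ = 1 - 0`.
-/

open Set Filter Topology

theorem HasDerivAt.of_comp_of_continuousAt {𝕜 : Type*} [NontriviallyNormedField 𝕜]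
    {f g h : 𝕜 → 𝕜} {a f' h' : 𝕜} (hg : ContinuousAt g a) (hf : HasDerivAt f f' (g a))
    (hf' : f' ≠ 0) (hh : HasDerivAt h h' a) (hcomp : f ∘ g =ᶠ[𝓝 a] h) :
    HasDerivAt g (h' / f') a := by
  have hinv : Function.LeftInverse (ContinuousLinearMap.toSpanSingleton 𝕜 f'⁻¹)
      (ContinuousLinearMap.toSpanSingleton 𝕜 f') := fun x => by simp [hf']
  simpa [div_eq_mul_inv] using
    (hf.hasFDerivAt.of_comp_of_leftInverse hg hh.hasFDerivAt hcomp hinv).hasDerivAt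

theorem Filter.Tendsto.of_strictMonoOn_Ici_comp {α : Type*} {l : Filter α} {φ : ℝ → ℝ}
    {g : α → ℝ} {c b : ℝ} (hφ : StrictMonoOn φ (Ici c)) (hb : c ≤ b)
    (hg : ∀ᶠ x in l, c ≤ g x) (h : Tendsto (φ ∘ g) l (𝓝 (φ b))) : Tendsto g l (𝓝 b) := by
  refine tendsto_order.2 ⟨fun d hdb => ?_, fun d hbd => ?_⟩
  · by_cases hcd : c ≤ d
    · filter_upwards [hg, (tendsto_order.1 h).1 _ ((hφ.lt_iff_lt hcd hb).2 hdb)] with x hx hφx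
      exact (hφ.lt_iff_lt hcd hx).1 hφx
    · filter_upwards [hg] with x hx
      exact (not_le.1 hcd).trans_le hx
  · have hcd : c ≤ d := hb.trans hbd.le
    filter_upwards [hg, (tendsto_order.1 h).2 _ ((hφ.lt_iff_lt hb hcd).2 hbd)] with x hx hφx
    exact (hφ.lt_iff_lt hx hcd).1 hφx

namespace StrictConvexOn

variable {ψ : ℝ → ℝ}

theorem deriv_neg_of_neg (hconv : StrictConvexOn ℝ univ ψ) (hdiff : Differentiable ℝ ψ)
    (hd0 : deriv ψ 0 = 0) {r : ℝ} (hr : r < 0) : deriv ψ r < 0 :=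
  hd0 ▸ hconv.strictMonoOn_deriv (fun x _ => hdiff x) trivial trivial hr

theorem deriv_pos_of_pos (hconv : StrictConvexOn ℝ univ ψ) (hdiff : Differentiable ℝ ψ)
    (hd0 : deriv ψ 0 = 0) {r : ℝ} (hr : 0 < r) : 0 < deriv ψ r :=
  hd0 ▸ hconv.strictMonoOn_deriv (fun x _ => hdiff x) trivial trivial hr

theorem strictMonoOn_Ici_of_deriv_eq_zero (hconv : StrictConvexOn ℝ univ ψ)
    (hdiff : Differentiable ℝ ψ) (hd0 : deriv ψ 0 = 0) : StrictMonoOn ψ (Ici 0) :=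
  strictMonoOn_of_deriv_pos (convex_Ici 0) hdiff.continuous.continuousOn fun x hx =>
    hconv.deriv_pos_of_pos hdiff hd0 (by rwa [interior_Ici] at hx)

theorem strictAntiOn_Iic_of_deriv_eq_zero (hconv : StrictConvexOn ℝ univ ψ)
    (hdiff : Differentiable ℝ ψ) (hd0 : deriv ψ 0 = 0) : StrictAntiOn ψ (Iic 0) :=
  strictAntiOn_of_deriv_neg (convex_Iic 0) hdiff.continuous.continuousOn fun x hx =>
    hconv.deriv_neg_of_neg hdiff hd0 (by rwa [interior_Iic] at hx)

end StrictConvexOn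

section ConjugateRoot

variable {ψ bar : ℝ → ℝ}

theorem conjugateRoot_zero (hmono : StrictMonoOn ψ (Ici 0))
    (hbar : ∀ r : ℝ, 0 ≤ bar r ∧ ψ (bar r) = ψ r) : bar 0 = 0 :=
  hmono.injOn (hbar 0).1 self_mem_Ici (hbar 0).2

theorem conjugateRoot_pos (hanti : StrictAntiOn ψ (Iic 0))
    (hbar : ∀ r : ℝ, 0 ≤ bar r ∧ ψ (bar r) = ψ r) {r : ℝ} (hr : r < 0) : 0 < bar r := by
  refine (hbar r).1.lt_of_ne fun h => (hanti hr.le self_mem_Iic hr).ne ?_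
  rw [h]
  exact (hbar r).2

theorem continuous_conjugateRoot (hmono : StrictMonoOn ψ (Ici 0)) (hψ : Continuous ψ)
    (hbar : ∀ r : ℝ, 0 ≤ bar r ∧ ψ (bar r) = ψ r) : Continuous bar := by
  refine continuous_iff_continuousAt.2 fun a => ?_
  refine Tendsto.of_strictMonoOn_Ici_comp hmono (hbar a).1 (.of_forall fun r => (hbar r).1) ?_
  have hcomp : ψ ∘ bar = ψ := funext fun r => (hbar r).2
  rw [hcomp, (hbar a).2]
  exact hψ.continuousAt

theorem hasDerivAt_conjugateRoot (hmono : StrictMonoOn ψ (Ici 0)) (hψ : Differentiable ℝ ψ)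
    (hbar : ∀ r : ℝ, 0 ≤ bar r ∧ ψ (bar r) = ψ r) {a : ℝ}
    (ha : deriv ψ (bar a) ≠ 0) :
    HasDerivAt bar (deriv ψ a / deriv ψ (bar a)) a :=
  HasDerivAt.of_comp_of_continuousAt
    (continuous_conjugateRoot hmono hψ.continuous hbar).continuousAt (hψ _).hasDerivAt ha
    (hψ a).hasDerivAt (.of_forall fun r => (hbar r).2)

theorem hasDerivAt_one_sub_conjugateRoot_sub_div (hmono : StrictMonoOn ψ (Ici 0))
    (hψ : Differentiable ℝ ψ) (hbar : ∀ r : ℝ, 0 ≤ bar r ∧ ψ (bar r) = ψ r) (η : ℝ)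
    {a : ℝ} (ha : deriv ψ (bar a) ≠ 0) :
    HasDerivAt (fun r => 1 - (bar r - r) / η)
      (1 / η * (1 - deriv ψ a / deriv ψ (bar a))) a := by
  have hgap := (hasDerivAt_conjugateRoot hmono hψ hbar ha).sub (hasDerivAt_id a)
  refine ((hgap.div_const η).const_sub 1).congr_deriv ?_
  ring

end ConjugateRoot

theorem ascension_time_density_general
    (ψ : ℝ → ℝ) (hψ : ContDiff ℝ 1 ψ)
    (hconv : StrictConvexOn ℝ Set.univ ψ)
    (hd0 : deriv ψ 0 = 0)
    (η : ℝ) (hη : 0 < η)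
    (bar : ℝ → ℝ) (hbar : ∀ r : ℝ, 0 ≤ bar r ∧ ψ (bar r) = ψ r)
    (θlam : ℝ) (hθlam : θlam < 0) (hθlam2 : bar θlam - θlam = η)
    (f : ℝ → ℝ)
    (hf : ∀ r : ℝ, f r = (1 / η) * (1 - deriv ψ r / deriv ψ (bar r))) :
    (∀ r ∈ Set.Ioo θlam 0, 0 ≤ f r) ∧ ∫ r in θlam..0, f r = 1 := by
  have hdiff : Differentiable ℝ ψ := hψ.differentiable one_ne_zero
  have hmono := hconv.strictMonoOn_Ici_of_deriv_eq_zero hdiff hd0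
  have hbar_pos : ∀ r < 0, 0 < deriv ψ (bar r) := fun r hr =>
    hconv.deriv_pos_of_pos hdiff hd0
      (conjugateRoot_pos (hconv.strictAntiOn_Iic_of_deriv_eq_zero hdiff hd0) hbar hr)
  have hf_nonneg : ∀ r ∈ Ioo θlam 0, 0 ≤ f r := fun r hr => by
    have hratio := div_nonpos_of_nonpos_of_nonneg (hconv.deriv_neg_of_neg hdiff hd0 hr.2).le
      (hbar_pos r hr.2).le
    rw [hf r]
    exact mul_nonneg (by positivity) (by linarith)
  set F : ℝ → ℝ := fun r => 1 - (bar r - r) / η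
  have hF_cont : Continuous F := by
    have := continuous_conjugateRoot hmono hdiff.continuous hbar
    fun_prop
  have hF_deriv : ∀ r ∈ Ioo θlam 0, HasDerivAt F (f r) r := fun r hr =>
    (hasDerivAt_one_sub_conjugateRoot_sub_div hmono hdiff hbar η (hbar_pos r hr.2).ne').congr_deriv
      (hf r).symm
  have hf_int : IntervalIntegrable f MeasureTheory.volume θlam 0 :=
    (intervalIntegrable_iff_integrableOn_Ioc_of_le hθlam.le).2
      (intervalIntegral.integrableOn_deriv_of_nonneg hF_cont.continuousOn hF_deriv hf_nonneg)
  refine ⟨hf_nonneg, ?_⟩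
  rw [intervalIntegral.integral_eq_sub_of_hasDerivAt_of_le hθlam.le hF_cont.continuousOn
    hF_deriv hf_int]
  simp only [F, conjugateRoot_zero hmono hbar, hθlam2]
  field_simp
  ring

/-- for a critical branching mechanism, the function
`f_λ(r) = (1/η)(1 - ψ'(r)/ψ'(r̄))` on `(θ_λ, 0)` is a probability density. -/
theorem ascension_time_density
    (ψ : ℝ → ℝ) (hψ : ContDiff ℝ 1 ψ)
    (hconv : StrictConvexOn ℝ Set.univ ψ)
    (hψ0 : ψ 0 = 0) (hd0 : deriv ψ 0 = 0)
    (lam η : ℝ) (hlam : 0 < lam) (hη : 0 < η) (hψη : ψ η = lam)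
    (bar : ℝ → ℝ) (hbar : ∀ r : ℝ, 0 ≤ bar r ∧ ψ (bar r) = ψ r)
    (θlam : ℝ) (hθlam : θlam < 0) (hθlam2 : bar θlam - θlam = η)
    (f : ℝ → ℝ)
    (hf : ∀ r : ℝ, f r = (1 / η) * (1 - deriv ψ r / deriv ψ (bar r))) :
    (∀ r ∈ Set.Ioo θlam 0, 0 ≤ f r) ∧ ∫ r in θlam..0, f r = 1 :=
  ascension_time_density_general ψ hψ hconv hd0 η hη bar hbar θlam hθlam hθlam2 f hf
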